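/- arXiv:2405.08095 — 4 statements merged into one kernel-verified Lean document; each statement's English description precedes it below -/
import Mathlib

section
/- If H is a linear operator on ℂⁿ and there exists a Hermitian positive-definite operator G with H†G = GH, then every eigenvalue of H is real. -/
open Matrix ComplexOrder

/-!
Pseudo-Hermiticity says that `H` is self-adjoint for the inner product `⟪x, y⟫_G = xᴴ G y`.
Hence at an eigenvector `v` with eigenvalue `μ`,
`conj μ ⟪v, v⟫_G = ⟪H v, v⟫_G = ⟪v, H v⟫_G = μ ⟪v, v⟫_G`,
and `⟪v, v⟫_G > 0` because `G` is positive definite.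
-/

namespace Matrix

variable {n : Type*} [Fintype n]

theorem exists_mulVec_eq_smul_of_mem_spectrum {K : Type*} [Field K] [DecidableEq n]
    {A : Matrix n n K} {μ : K} (hμ : μ ∈ spectrum K A) :
    ∃ v : n → K, v ≠ 0 ∧ A *ᵥ v = μ • v := by
  rw [← spectrum_toLin', ← Module.End.hasEigenvalue_iff_mem_spectrum] at hμ
  obtain ⟨v, hv⟩ := hμ.exists_hasEigenvector
  exact ⟨v, hv.2, hv.apply_eq_smul⟩

theorem PosDef.star_eq_of_conjTranspose_mul_eq_mul {𝕜 : Type*} [RCLike 𝕜]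
    {G H : Matrix n n 𝕜} (hG : G.PosDef) (h : Hᴴ * G = G * H) {μ : 𝕜} {v : n → 𝕜}
    (hv : v ≠ 0) (hHv : H *ᵥ v = μ • v) :
    star μ = μ := by
  have hform : star μ * (star v ⬝ᵥ G *ᵥ v) = μ * (star v ⬝ᵥ G *ᵥ v) :=
    calc star μ * (star v ⬝ᵥ G *ᵥ v)
        = star (H *ᵥ v) ⬝ᵥ G *ᵥ v := by rw [hHv, star_smul, smul_dotProduct, smul_eq_mul]
      _ = star v ⬝ᵥ (Hᴴ * G) *ᵥ v := by
          rw [← mulVec_mulVec, dotProduct_mulVec (star v), star_mulVec]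
      _ = star v ⬝ᵥ (G * H) *ᵥ v := by rw [h]
      _ = μ * (star v ⬝ᵥ G *ᵥ v) := by
          rw [← mulVec_mulVec, hHv, mulVec_smul, dotProduct_smul, smul_eq_mul]
  exact mul_right_cancel₀ (hG.dotProduct_mulVec_pos hv).ne' hform

end Matrix

/-- If H admits a Hermitian positive-definite G with H†G = GH, then every
eigenvalue of H is real. -/
theorem stmt1 (n : ℕ) (H G : Matrix (Fin n) (Fin n) ℂ) (hG : G.PosDef)
    (h : Hᴴ * G = G * H) :
    ∀ μ : ℂ, μ ∈ spectrum ℂ H → μ.im = 0 := by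
  intro μ hμ
  obtain ⟨v, hv, hHv⟩ := exists_mulVec_eq_smul_of_mem_spectrum hμ
  exact Complex.conj_eq_iff_im.mp (hG.star_eq_of_conjTranspose_mul_eq_mul h hv hHv)
end

section
/- Let U be a unitary on ℂᵐ ⊗ ℂⁿ such that for every operator A on ℂᵐ there exists an operator A' on ℂᵐ with U(A ⊗ 1)U† = A' ⊗ 1, and for every operator B on ℂⁿ there exists B' with U(1 ⊗ B)U† = 1 ⊗ B'. Then U = U₁ ⊗ U₂ for some unitaries U₁ on ℂᵐ and U₂ on ℂⁿ (up to a global phase). -/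
/-!
Conjugation by `U` restricts to injective algebra endomorphisms of `M_m` and `M_n`; by
Skolem–Noether these are conjugations by invertible matrices `P` and `Q`. Then `(P ⊗ Q)⁻¹ U`
commutes with every `A ⊗ 1` and `1 ⊗ B`, hence with all matrix units, so it is a scalar `c` and
`U = (c • P) ⊗ Q`. For a unitary Kronecker product `P ⊗ Q`, `Pᴴ P` and `Qᴴ Q` are scalars with
product `1`, the first positive, so rescaling the factors by a real square root makes both unitary.
-/

open Matrix Kronecker

theorem AlgHom.exists_comp_eq_of_injective {R A B C : Type*} [CommSemiring R]
    [Semiring A] [Semiring B] [Semiring C] [Algebra R A] [Algebra R B] [Algebra R C]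
    (f : A →ₐ[R] C) (g : B →ₐ[R] C) (hg : Function.Injective g) (hf : ∀ a, ∃ b, g b = f a) :
    ∃ h : A →ₐ[R] B, ∀ a, g (h a) = f a :=
  ⟨(AlgEquiv.ofInjective g hg).symm.toAlgHom.comp
    (f.codRestrict g.range fun a => g.mem_range.mpr (hf a)), fun _ =>
    congrArg Subtype.val ((AlgEquiv.ofInjective g hg).apply_symm_apply _)⟩

theorem commute_mul_of_mul_mul_eq {M : Type*} [Monoid M] {a u u' v v' : M} (hu : u' * u = 1)
    (hv : v' * v = 1) (h : u * a * u' = v * a * v') : Commute a (v' * u) := by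
  calc a * (v' * u) = v' * (v * a * v') * u := by simp only [← mul_assoc, hv, one_mul]
    _ = v' * u * a * (u' * u) := by simp only [← h, mul_assoc]
    _ = v' * u * a := by rw [hu, mul_one]

namespace Matrix

section Kronecker

variable (R m n : Type*) [CommSemiring R] [Fintype m] [DecidableEq m] [Fintype n] [DecidableEq n]

def kroneckerOneAlgHom : Matrix m m R →ₐ[R] Matrix (m × n) (m × n) R where
  toFun A := A ⊗ₖ 1
  map_one' := one_kronecker_one
  map_mul' A B := by rw [← mul_kronecker_mul, one_mul]
  map_zero' := zero_kronecker _
  map_add' A B := add_kronecker _ _ _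
  commutes' r := by simp [Algebra.algebraMap_eq_smul_one, smul_kronecker]

def oneKroneckerAlgHom : Matrix n n R →ₐ[R] Matrix (m × n) (m × n) R where
  toFun B := 1 ⊗ₖ B
  map_one' := one_kronecker_one
  map_mul' A B := by rw [← mul_kronecker_mul, one_mul]
  map_zero' := kronecker_zero _
  map_add' A B := kronecker_add _ _ _
  commutes' r := by simp [Algebra.algebraMap_eq_smul_one, kronecker_smul]

variable {R m n}

@[simp] lemma kroneckerOneAlgHom_apply (A : Matrix m m R) :
    kroneckerOneAlgHom R m n A = A ⊗ₖ 1 := rfl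

@[simp] lemma oneKroneckerAlgHom_apply (B : Matrix n n R) :
    oneKroneckerAlgHom R m n B = 1 ⊗ₖ B := rfl

lemma kroneckerOneAlgHom_injective [Nonempty n] :
    Function.Injective (kroneckerOneAlgHom R m n) := by
  intro A B h
  obtain ⟨k⟩ := ‹Nonempty n›
  ext i j
  simpa using congr_fun₂ h (i, k) (j, k)

lemma oneKroneckerAlgHom_injective [Nonempty m] :
    Function.Injective (oneKroneckerAlgHom R m n) := by
  intro A B h
  obtain ⟨k⟩ := ‹Nonempty m›
  ext i j
  simpa using congr_fun₂ h (k, i) (k, j)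

theorem mem_range_scalar_of_commute_kronecker {X : Matrix (m × n) (m × n) R}
    (hA : ∀ A : Matrix m m R, Commute (A ⊗ₖ 1) X)
    (hB : ∀ B : Matrix n n R, Commute (1 ⊗ₖ B) X) :
    X ∈ Set.range (scalar (m × n)) := by
  refine mem_range_scalar_of_commute_single fun p q _ => ?_
  have hsplit : single p q (1 : R) = (single p.1 q.1 1 ⊗ₖ 1) * (1 ⊗ₖ single p.2 q.2 1) := by
    rw [← mul_kronecker_mul, mul_one, one_mul, single_kronecker_single, mul_one]
  change Commute (single p q 1) X
  exact hsplit ▸ (hA _).mul_left (hB _)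

theorem exists_eq_smul_kronecker_of_conj {U U' : Matrix (m × n) (m × n) R}
    (hU : U' * U = 1) (P : (Matrix m m R)ˣ) (Q : (Matrix n n R)ˣ)
    (hP : ∀ A : Matrix m m R,
      U * (A ⊗ₖ 1) * U' = ((P : Matrix m m R) * A * (↑P⁻¹ : Matrix m m R)) ⊗ₖ 1)
    (hQ : ∀ B : Matrix n n R,
      U * (1 ⊗ₖ B) * U' = 1 ⊗ₖ ((Q : Matrix n n R) * B * (↑Q⁻¹ : Matrix n n R))) :
    ∃ c : R, U = (c • (P : Matrix m m R)) ⊗ₖ (Q : Matrix n n R) := by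
  set PQ : Matrix (m × n) (m × n) R := (P : Matrix m m R) ⊗ₖ (Q : Matrix n n R)
  set PQ' : Matrix (m × n) (m × n) R := (↑P⁻¹ : Matrix m m R) ⊗ₖ (↑Q⁻¹ : Matrix n n R)
  have hPQ' : PQ' * PQ = 1 := by simp [PQ, PQ', ← mul_kronecker_mul]
  have hPQ : PQ * PQ' = 1 := by simp [PQ, PQ', ← mul_kronecker_mul]
  obtain ⟨c, hc⟩ := mem_range_scalar_of_commute_kronecker (X := PQ' * U)
    (fun A => commute_mul_of_mul_mul_eq hU hPQ' <| by
      simpa [PQ, PQ', ← mul_kronecker_mul] using hP A)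
    (fun B => commute_mul_of_mul_mul_eq hU hPQ' <| by
      simpa [PQ, PQ', ← mul_kronecker_mul] using hQ B)
  refine ⟨c, ?_⟩
  calc U = PQ * (PQ' * U) := by rw [← mul_assoc, hPQ, one_mul]
    _ = _ := by
      rw [← hc, scalar_apply, ← smul_one_eq_diagonal, Matrix.mul_smul, mul_one, smul_kronecker]

end Kronecker

theorem exists_units_conj_of_injective {K m : Type*} [Field K] [Fintype m] [DecidableEq m]
    (φ : Matrix m m K →ₐ[K] Matrix m m K) (hφ : Function.Injective φ) :
    ∃ P : (Matrix m m K)ˣ, ∀ A, φ A = (P : Matrix m m K) * A * (↑P⁻¹ : Matrix m m K) := by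
  have hbij : Function.Bijective φ :=
    ⟨hφ, LinearMap.injective_iff_surjective (f := φ.toLinearMap) |>.mp hφ⟩
  obtain ⟨T, hT⟩ := ((LinearMap.toMatrixAlgEquiv'.trans (AlgEquiv.ofBijective φ hbij)).trans
    toLinAlgEquiv').eq_linearEquivConjAlgEquiv
  have hconj (A : Matrix m m K) :
      φ A = LinearMap.toMatrixAlgEquiv' T.toLinearMap * A *
        LinearMap.toMatrixAlgEquiv' T.symm.toLinearMap := by
    simpa [LinearEquiv.conjAlgEquiv_apply, LinearMap.toMatrixAlgEquiv'_comp, mul_assoc] using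
      congr(LinearMap.toMatrixAlgEquiv' ($hT (toLinAlgEquiv' A)))
  refine ⟨⟨_, _, ?_, ?_⟩, hconj⟩ <;>
    simp [← LinearMap.toMatrixAlgEquiv'_comp]

theorem exists_units_conj_of_unitary_conj_mem_range {K m ι : Type*} [Field K] [StarRing K]
    [Fintype m] [DecidableEq m] [Fintype ι] [DecidableEq ι]
    (g : Matrix m m K →ₐ[K] Matrix ι ι K) (hg : Function.Injective g)
    {U : Matrix ι ι K} (hU : U ∈ unitaryGroup ι K) (h : ∀ A, ∃ A', U * g A * Uᴴ = g A') :
    ∃ P : (Matrix m m K)ˣ,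
      ∀ A, U * g A * Uᴴ = g ((P : Matrix m m K) * A * (↑P⁻¹ : Matrix m m K)) := by
  let conjU := (Unitary.conjStarAlgAut K _ ⟨U, hU⟩).toAlgEquiv
  obtain ⟨φ, hφ⟩ := AlgHom.exists_comp_eq_of_injective (conjU.toAlgHom.comp g) g hg
    fun A => (h A).imp fun _ hA' => hA'.symm
  have hφinj : Function.Injective φ := by
    refine Function.Injective.of_comp (f := g) ?_
    convert conjU.injective.comp hg using 1
    exact funext hφ
  obtain ⟨P, hP⟩ := exists_units_conj_of_injective φ hφinj
  exact ⟨P, fun A => by rw [← hP, hφ]; rfl⟩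

section Unitary

variable {m n : Type*} [Fintype m] [DecidableEq m] [Fintype n] [DecidableEq n]

omit [Fintype m] [Fintype n] in
theorem exists_smul_one_of_kronecker_eq_one {R : Type*} [CommRing R] [Nonempty m] [Nonempty n]
    {A : Matrix m m R} {B : Matrix n n R} (h : A ⊗ₖ B = 1) :
    ∃ a b : R, a * b = 1 ∧ A = a • 1 ∧ B = b • 1 := by
  obtain ⟨i₀⟩ := ‹Nonempty m›
  obtain ⟨k₀⟩ := ‹Nonempty n›
  rw [← one_kronecker_one] at h
  have hentry (i j : m) (k l : n) :
      A i j * B k l = (1 : Matrix m m R) i j * (1 : Matrix n n R) k l := by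
    simpa using congr_fun₂ h (i, k) (j, l)
  have hab : A i₀ i₀ * B k₀ k₀ = 1 := by simpa using hentry i₀ i₀ k₀ k₀
  refine ⟨A i₀ i₀, B k₀ k₀, hab, ?_, ?_⟩ <;> ext i j
  · have := hentry i j k₀ k₀
    simp only [one_apply_eq, mul_one] at this
    simp only [smul_apply, smul_eq_mul]
    linear_combination A i₀ i₀ * this - A i j * hab
  · have := hentry i₀ i₀ i j
    simp only [one_apply_eq, one_mul] at this
    simp only [smul_apply, smul_eq_mul]
    linear_combination B k₀ k₀ * this - B i j * hab

variable {𝕜 : Type*} [RCLike 𝕜]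

theorem smul_mem_unitaryGroup_of_conjTranspose_mul_self {M : Matrix m m 𝕜} {r t : ℝ}
    (hM : Mᴴ * M = (r : 𝕜) • 1) (ht : t * t * r = 1) : (t : 𝕜) • M ∈ unitaryGroup m 𝕜 := by
  rw [mem_unitaryGroup_iff', star_eq_conjTranspose, conjTranspose_smul, Matrix.smul_mul,
    Matrix.mul_smul, hM, smul_smul, smul_smul, RCLike.star_def, RCLike.conj_ofReal,
    ← RCLike.ofReal_mul, ← RCLike.ofReal_mul, ht, RCLike.ofReal_one, one_smul]

open scoped ComplexOrder in
theorem exists_unitary_kronecker_eq_of_kronecker_mem_unitaryGroup [Nonempty m] [Nonempty n]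
    {P : Matrix m m 𝕜} {Q : Matrix n n 𝕜} (h : P ⊗ₖ Q ∈ unitaryGroup (m × n) 𝕜) :
    ∃ U₁ ∈ unitaryGroup m 𝕜, ∃ U₂ ∈ unitaryGroup n 𝕜, P ⊗ₖ Q = U₁ ⊗ₖ U₂ := by
  have h1 : (Pᴴ * P) ⊗ₖ (Qᴴ * Q) = 1 := by
    rw [mul_kronecker_mul, ← conjTranspose_kronecker, ← star_eq_conjTranspose]
    exact mem_unitaryGroup_iff'.mp h
  obtain ⟨a, b, hab, hP, hQ⟩ := exists_smul_one_of_kronecker_eq_one h1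
  have ha : 0 < a := by
    obtain ⟨i⟩ := ‹Nonempty m›
    refine lt_of_le_of_ne ?_ (left_ne_zero_of_mul_eq_one hab).symm
    simpa [hP] using (posSemidef_conjTranspose_mul_self P).diag_nonneg (i := i)
  obtain ⟨r, hr, rfl⟩ := RCLike.pos_iff_exists_ofReal.mp ha
  have hb : b = ((r⁻¹ : ℝ) : 𝕜) := by
    rw [RCLike.ofReal_inv, eq_inv_of_mul_eq_one_right hab]
  set s := √r
  have hs : s ^ 2 = r := Real.sq_sqrt hr.le
  have hs0 : s ≠ 0 := by positivity
  refine ⟨((s⁻¹ : ℝ) : 𝕜) • P, smul_mem_unitaryGroup_of_conjTranspose_mul_self hP ?_,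
    (s : 𝕜) • Q, smul_mem_unitaryGroup_of_conjTranspose_mul_self (hb ▸ hQ) ?_, ?_⟩
  · field_simp; exact hs.symm
  · field_simp; exact hs
  · rw [smul_kronecker, kronecker_smul, smul_smul, ← RCLike.ofReal_mul, inv_mul_cancel₀ hs0,
      RCLike.ofReal_one, one_smul]

end Unitary

end Matrix

/-- A unitary on ℂᵐ ⊗ ℂⁿ whose conjugation preserves both local operator
algebras B(ℂᵐ)⊗1 and 1⊗B(ℂⁿ) is a tensor product of local unitaries. -/
theorem stmt11 (m n : ℕ) (hm : 2 ≤ m) (hn : 2 ≤ n)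
    (U : Matrix (Fin m × Fin n) (Fin m × Fin n) ℂ)
    (hU : U ∈ Matrix.unitaryGroup (Fin m × Fin n) ℂ)
    (hA : ∀ A : Matrix (Fin m) (Fin m) ℂ, ∃ A' : Matrix (Fin m) (Fin m) ℂ,
      U * (A ⊗ₖ (1 : Matrix (Fin n) (Fin n) ℂ)) * Uᴴ
        = A' ⊗ₖ (1 : Matrix (Fin n) (Fin n) ℂ))
    (hB : ∀ B : Matrix (Fin n) (Fin n) ℂ, ∃ B' : Matrix (Fin n) (Fin n) ℂ,
      U * ((1 : Matrix (Fin m) (Fin m) ℂ) ⊗ₖ B) * Uᴴ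
        = (1 : Matrix (Fin m) (Fin m) ℂ) ⊗ₖ B') :
    ∃ (U₁ : Matrix (Fin m) (Fin m) ℂ) (U₂ : Matrix (Fin n) (Fin n) ℂ),
      U₁ ∈ Matrix.unitaryGroup (Fin m) ℂ ∧
      U₂ ∈ Matrix.unitaryGroup (Fin n) ℂ ∧
      U = U₁ ⊗ₖ U₂ := by
  have : Nonempty (Fin m) := ⟨⟨0, by omega⟩⟩
  have : Nonempty (Fin n) := ⟨⟨0, by omega⟩⟩
  obtain ⟨P, hP⟩ := exists_units_conj_of_unitary_conj_mem_range
    (kroneckerOneAlgHom ℂ _ (Fin n)) kroneckerOneAlgHom_injective hU hA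
  obtain ⟨Q, hQ⟩ := exists_units_conj_of_unitary_conj_mem_range
    (oneKroneckerAlgHom ℂ (Fin m) _) oneKroneckerAlgHom_injective hU hB
  obtain ⟨c, hc⟩ := exists_eq_smul_kronecker_of_conj
    (by simpa [star_eq_conjTranspose] using mem_unitaryGroup_iff'.mp hU) P Q hP hQ
  obtain ⟨U₁, h₁, U₂, h₂, h⟩ :=
    exists_unitary_kronecker_eq_of_kronecker_mem_unitaryGroup (hc ▸ hU)
  exact ⟨U₁, U₂, h₁, h₂, hc.trans h⟩
end

section
/- Let H be a Hermitian operator on ℂⁿ, let L₁,…,L_k be operators, and set the effective Hamiltonian H_e = H - (i/2) Σⱼ Lⱼ†Lⱼ. If there exists a Hermitian positive-definite G with H_e†G = GH_e, then tr(G · Σⱼ Lⱼ†Lⱼ) = 0, and hence Lⱼ = 0 for all j; i.e. a quasi-Hermitian effective Lindblad Hamiltonian forces all jump operators to vanish. -/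
/-!
Taking traces of `H_eᴴ G = G H_e` cancels the Hermitian part and leaves `tr (G K) = 0`.
Each summand `tr (G Lⱼᴴ Lⱼ) = tr (Lⱼ G Lⱼᴴ)` is nonnegative, so all vanish, and a positive
definite `G` forces every row of `Lⱼ` to be zero.
-/

open Matrix ComplexOrder

namespace Matrix

variable {m n 𝕜 : Type*} [Fintype n] [RCLike 𝕜]

theorem trace_mul_eq_zero_of_conjTranspose_mul_eq_mul {H K G : Matrix n n 𝕜}
    (hH : H.IsHermitian) (hK : K.IsHermitian) {c : 𝕜} (hc : star c ≠ c)
    (h : (H - c • K)ᴴ * G = G * (H - c • K)) : (G * K).trace = 0 := by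
  rw [conjTranspose_sub, conjTranspose_smul, hH.eq, hK.eq] at h
  have htr := congrArg trace h
  rw [sub_mul, Matrix.mul_sub, smul_mul_assoc, Matrix.mul_smul, trace_sub, trace_sub,
    trace_smul, trace_smul, trace_mul_comm H G, trace_mul_comm K G, smul_eq_mul,
    smul_eq_mul] at htr
  have hcoef : (c - star c) * (G * K).trace = 0 := by linear_combination htr
  exact (mul_eq_zero.mp hcoef).resolve_left (sub_ne_zero.mpr hc.symm)

theorem diag_mul_mul_conjTranspose (A : Matrix n n 𝕜) (B : Matrix m n 𝕜) (i : m) :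
    (B * A * Bᴴ) i i = star (star (B i)) ⬝ᵥ (A *ᵥ star (B i)) := by
  rw [Matrix.mul_assoc, mul_apply]
  simp [dotProduct, mulVec, mul_apply]

theorem PosDef.trace_mul_mul_conjTranspose_eq_zero_iff [Fintype m] {A : Matrix n n 𝕜}
    (hA : A.PosDef) (B : Matrix m n 𝕜) : (B * A * Bᴴ).trace = 0 ↔ B = 0 := by
  refine ⟨fun htr => ?_, fun hB => by simp [hB]⟩
  have hdiag : ∀ i, (B * A * Bᴴ) i i = 0 :=
    fun i => (Finset.sum_eq_zero_iff_of_nonneg fun i _ =>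
      (hA.posSemidef.mul_mul_conjTranspose_same B).diag_nonneg).mp htr i (Finset.mem_univ i)
  ext i j
  have hrow : star (B i) = 0 := by
    by_contra hne
    exact (hA.dotProduct_mulVec_pos hne).ne' (by rw [← diag_mul_mul_conjTranspose, hdiag])
  simpa using congrFun hrow j

theorem PosDef.trace_mul_sum_conjTranspose_mul_self_eq_zero_iff [Fintype m] {ι : Type*}
    [Fintype ι] {G : Matrix n n 𝕜} (hG : G.PosDef) (L : ι → Matrix m n 𝕜) :
    (G * ∑ j, (L j)ᴴ * L j).trace = 0 ↔ ∀ j, L j = 0 := by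
  have hcycle : ∀ j, (G * ((L j)ᴴ * L j)).trace = (L j * G * (L j)ᴴ).trace := fun j => by
    rw [← Matrix.mul_assoc, trace_mul_cycle]
  rw [Matrix.mul_sum, trace_sum, Finset.sum_congr rfl fun j _ => hcycle j,
    Finset.sum_eq_zero_iff_of_nonneg fun j _ =>
      (hG.posSemidef.mul_mul_conjTranspose_same (L j)).trace_nonneg]
  simp only [Finset.mem_univ, true_implies, hG.trace_mul_mul_conjTranspose_eq_zero_iff]

end Matrix

/-- If the effective Lindblad Hamiltonian H_e = H - (i/2)ΣⱼLⱼ†Lⱼ (H Hermitian)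
is quasi-Hermitian with respect to a Hermitian positive-definite G, then
tr(G·ΣⱼLⱼ†Lⱼ) = 0 and all jump operators vanish. -/
theorem stmt16 (n k : ℕ) (H : Matrix (Fin n) (Fin n) ℂ) (hH : H.IsHermitian)
    (L : Fin k → Matrix (Fin n) (Fin n) ℂ)
    (G : Matrix (Fin n) (Fin n) ℂ) (hG : G.PosDef)
    (h : (H - (Complex.I / 2) • ∑ j, (L j)ᴴ * L j)ᴴ * G
        = G * (H - (Complex.I / 2) • ∑ j, (L j)ᴴ * L j)) :
    (G * ∑ j, (L j)ᴴ * L j).trace = 0 ∧ ∀ j, L j = 0 := by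
  have hK : (∑ j, (L j)ᴴ * L j).IsHermitian :=
    isSelfAdjoint_sum _ fun j _ => isHermitian_conjTranspose_mul_self (L j)
  have hc : star (Complex.I / 2) ≠ Complex.I / 2 := by norm_num [Complex.ext_iff]
  have htr := trace_mul_eq_zero_of_conjTranspose_mul_eq_mul hH hK hc h
  exact ⟨htr, (hG.trace_mul_sum_conjTranspose_mul_self_eq_zero_iff L).mp htr⟩
end

section
/- If H is a linear operator on ℂⁿ admitting a Hermitian positive-definite G with H†G = GH, then H is diagonalizable (similar to a real diagonal matrix); specifically η H η⁻¹ is Hermitian for η the positive square root of G, so H = η⁻¹(ηHη⁻¹)η is similar to a Hermitian matrix. -/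
/-!
Write `G = η * η` with `η` invertible and Hermitian (the positive square root of `G`). Then
`Hᴴ G = G H` says exactly that `η H η⁻¹` is Hermitian, and the spectral theorem diagonalizes it by
a unitary `U` with real eigenvalues, so `H = (Uᴴ η)⁻¹ D (Uᴴ η)` for a real diagonal `D`.
-/

open Matrix ComplexOrder

namespace Matrix

variable {n α 𝕜 : Type*} [Fintype n] [DecidableEq n]

theorem isHermitian_mul_mul_inv_of_conjTranspose_mul_eq [CommRing α] [StarRing α]
    {H B : Matrix n n α} (hB : IsUnit B.det) (h : Hᴴ * (Bᴴ * B) = Bᴴ * B * H) :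
    (B * H * B⁻¹).IsHermitian := by
  have hBstar : (Bᴴ)⁻¹ * Bᴴ = 1 := nonsing_inv_mul _ (by rwa [det_conjTranspose, isUnit_star])
  calc (B * H * B⁻¹)ᴴ = (Bᴴ)⁻¹ * (Hᴴ * (Bᴴ * B)) * B⁻¹ := by
        rw [conjTranspose_mul, conjTranspose_mul, conjTranspose_nonsing_inv, mul_assoc,
          mul_assoc, mul_assoc, mul_nonsing_inv _ hB, mul_one]
    _ = B * H * B⁻¹ := by
        rw [h, ← mul_assoc, ← mul_assoc, hBstar, one_mul]

variable [RCLike 𝕜]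

theorem IsHermitian.exists_eq_inv_mul_diagonal_mul {A : Matrix n n 𝕜} (hA : A.IsHermitian) :
    ∃ (P : Matrix n n 𝕜) (d : n → ℝ), IsUnit P.det ∧
      A = P⁻¹ * diagonal (fun i => (d i : 𝕜)) * P := by
  set U := hA.eigenvectorUnitary
  refine ⟨star (U : Matrix n n 𝕜), hA.eigenvalues, ?_, ?_⟩
  · exact (isUnit_iff_isUnit_det _).mp (Unitary.isUnit_coe (U := star U))
  · rw [inv_eq_left_inv (Unitary.mul_star_self_of_mem U.2)]
    exact hA.spectral_theorem

theorem exists_eq_inv_mul_diagonal_mul_of_isHermitian_mul_mul_inv {H B : Matrix n n 𝕜}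
    (hB : IsUnit B.det) (hA : (B * H * B⁻¹).IsHermitian) :
    ∃ (P : Matrix n n 𝕜) (d : n → ℝ), IsUnit P.det ∧
      H = P⁻¹ * diagonal (fun i => (d i : 𝕜)) * P := by
  obtain ⟨P, d, hP, hPd⟩ := hA.exists_eq_inv_mul_diagonal_mul
  refine ⟨P * B, d, by rw [det_mul]; exact hP.mul hB, ?_⟩
  calc H = B⁻¹ * (B * H * B⁻¹) * B := by
        rw [mul_assoc B, nonsing_inv_mul_cancel_left _ _ hB, nonsing_inv_mul_cancel_right _ _ hB]
    _ = (P * B)⁻¹ * diagonal (fun i => (d i : 𝕜)) * (P * B) := by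
        rw [hPd, Matrix.mul_inv_rev]
        simp only [mul_assoc]

open scoped MatrixOrder in
theorem PosDef.exists_isUnit_isHermitian_eq_mul_self {G : Matrix n n 𝕜} (hG : G.PosDef) :
    ∃ η : Matrix n n 𝕜, IsUnit η.det ∧ η.IsHermitian ∧ G = η * η := by
  obtain ⟨η, hη, hηsa, rfl⟩ :=
    CStarAlgebra.isStrictlyPositive_iff_exists_isUnit_and_isSelfAdjoint_and_eq_mul_self.mp
      hG.isStrictlyPositive
  exact ⟨η, (isUnit_iff_isUnit_det η).mp hη, hηsa, rfl⟩

end Matrix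

/-- A quasi-Hermitian operator is similar to a real diagonal matrix. -/
theorem stmt19 (n : ℕ) (H G : Matrix (Fin n) (Fin n) ℂ) (hG : G.PosDef)
    (h : Hᴴ * G = G * H) :
    ∃ (P : Matrix (Fin n) (Fin n) ℂ) (d : Fin n → ℝ),
      IsUnit P.det ∧
      H = P⁻¹ * Matrix.diagonal (fun i => (d i : ℂ)) * P := by
  obtain ⟨η, hη, hηherm, rfl⟩ := hG.exists_isUnit_isHermitian_eq_mul_self
  exact exists_eq_inv_mul_diagonal_mul_of_isHermitian_mul_mul_inv hη
    (isHermitian_mul_mul_inv_of_conjTranspose_mul_eq hη (by rwa [hηherm.eq]))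
end
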